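/- Let a be a positive real number, let b be a complex number with nonzero imaginary part, and suppose the triangle with vertices 0, a, b is inscribed in a circle of radius d > 0, i.e. there is a complex number c with |c| = |a − c| = |b − c| = d. Suppose moreover that |a − b| ≥ 2r for some real r > 0. Then for all complex numbers α, β one has |(α/a − β/b)/(1 − (conj b)/b)| ≤ (d/r)·max(|α|/a, |β|/|b|). -/

import Mathlib

/-!
Write `b = x + iy`. The denominator `1 - b̄/b = 2iy/b` has modulus `2|y|/|b|` and the numerator is
at most `2 max(|α|/a, |β|/|b|)`, so it suffices that `r|b| ≤ d|y|`. This is the law of sines: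
for a triangle `0, p, q` with circumradius `d`, `|p||q||p - q| = 4d · area = 2d |Im(p̄q)|`,
so here `|b||a - b| = 2d|y|`, while `|a - b| ≥ 2r`.
-/

open ComplexConjugate

namespace Complex

theorem re_sq_add_im_sq_eq_of_norm_sub_eq {z c : ℂ} (h : ‖z - c‖ = ‖c‖) :
    z.re ^ 2 + z.im ^ 2 = 2 * (z.re * c.re + z.im * c.im) := by
  have h2 := congrArg (· ^ 2) h
  simp only [← normSq_eq_norm_sq, normSq_apply, sub_re, sub_im] at h2
  linear_combination h2

theorem norm_mul_norm_mul_norm_sub_of_circumcenter {p q c : ℂ} (hp : ‖p - c‖ = ‖c‖)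
    (hq : ‖q - c‖ = ‖c‖) : ‖p‖ * ‖q‖ * ‖p - q‖ = 2 * ‖c‖ * |(conj p * q).im| := by
  have hp' := re_sq_add_im_sq_eq_of_norm_sub_eq hp
  have hq' := re_sq_add_im_sq_eq_of_norm_sub_eq hq
  set P := p.re ^ 2 + p.im ^ 2
  set Q := q.re ^ 2 + q.im ^ 2
  set D := p.re * q.im - p.im * q.re
  -- Cramer's rule for the circumcenter
  have hx : 2 * D * c.re = P * q.im - Q * p.im := by linear_combination p.im * hq' - q.im * hp'
  have hy : 2 * D * c.im = Q * p.re - P * q.re := by linear_combination q.re * hp' - p.re * hq'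
  rw [← sq_eq_sq₀ (by positivity) (by positivity)]
  simp only [mul_pow, sq_abs, ← normSq_eq_norm_sq, normSq_apply, mul_im, conj_re, conj_im, sub_re,
    sub_im]
  linear_combination (-(2 * D * c.re + P * q.im - Q * p.im)) * hx
    - (2 * D * c.im + Q * p.re - P * q.re) * hy

theorem norm_one_sub_conj_div_self {b : ℂ} (hb : b ≠ 0) :
    ‖1 - conj b / b‖ = 2 * |b.im| / ‖b‖ := by
  rw [one_sub_div hb, sub_conj, norm_div, norm_mul, norm_I, mul_one, norm_real, Real.norm_eq_abs,
    abs_mul, abs_two]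

end Complex

theorem beltrami_bound_circumradius_general (a : ℝ) (ha : 0 < a) (b : ℂ) (hb : b.im ≠ 0)
    (d r : ℝ) (hr : 0 < r)
    (hcirc : ∃ c : ℂ, ‖c‖ = d ∧ ‖(a : ℂ) - c‖ = d ∧
      ‖b - c‖ = d)
    (hab : 2 * r ≤ ‖(a : ℂ) - b‖) :
    ∀ α β : ℂ,
      ‖(α / a - β / b) / (1 - (starRingEnd ℂ) b / b)‖ ≤
        (d / r) * max (‖α‖ / a) (‖β‖ / ‖b‖) := by
  intro α β
  obtain ⟨c, rfl, hca, hcb⟩ := hcirc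
  have hb0 : b ≠ 0 := fun h => hb (by simp [h])
  have hsine : ‖b‖ * ‖(a : ℂ) - b‖ = 2 * ‖c‖ * |b.im| := by
    have := Complex.norm_mul_norm_mul_norm_sub_of_circumcenter hca hcb
    simp only [Complex.norm_real, Real.norm_eq_abs, abs_of_pos ha, Complex.conj_ofReal,
      Complex.mul_im, Complex.ofReal_re, Complex.ofReal_im, zero_mul, add_zero, abs_mul] at this
    exact mul_left_cancel₀ ha.ne' (by linear_combination this)
  have hrb : r * ‖b‖ ≤ ‖c‖ * |b.im| := by nlinarith [norm_nonneg b]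
  set M := max (‖α‖ / a) (‖β‖ / ‖b‖)
  have hnum : ‖α / a - β / b‖ ≤ 2 * M := by
    calc ‖α / a - β / b‖ ≤ ‖α‖ / a + ‖β‖ / ‖b‖ := by
          simpa [abs_of_pos ha] using norm_sub_le (α / a) (β / b)
      _ ≤ M + M := add_le_add (le_max_left _ _) (le_max_right _ _)
      _ = 2 * M := (two_mul M).symm
  have hM : 0 ≤ M := (by positivity : 0 ≤ ‖α‖ / a).trans (le_max_left _ _)
  rw [norm_div, Complex.norm_one_sub_conj_div_self hb0, div_le_iff₀ (by positivity)]
  calc ‖α / a - β / b‖ ≤ 2 * M := hnum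
    _ = 2 * |b.im| / ‖b‖ * (M / r * (r * ‖b‖) / |b.im|) := by field_simp
    _ ≤ 2 * |b.im| / ‖b‖ * (M / r * (‖c‖ * |b.im|) / |b.im|) := by gcongr
    _ = ‖c‖ / r * M * (2 * |b.im| / ‖b‖) := by field_simp

/-- Key estimate: for a triangle `0, a, b` inscribed in a circle of radius `d`
with `|a − b| ≥ 2r`, the infinitesimal Beltrami coefficient is bounded by
`(d/r)·max(|α|/a, |β|/|b|)`. -/
theorem beltrami_bound_circumradius (a : ℝ) (ha : 0 < a) (b : ℂ) (hb : b.im ≠ 0)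
    (d r : ℝ) (hd : 0 < d) (hr : 0 < r)
    (hcirc : ∃ c : ℂ, ‖c‖ = d ∧ ‖(a : ℂ) - c‖ = d ∧
      ‖b - c‖ = d)
    (hab : 2 * r ≤ ‖(a : ℂ) - b‖) :
    ∀ α β : ℂ,
      ‖(α / a - β / b) / (1 - (starRingEnd ℂ) b / b)‖ ≤
        (d / r) * max (‖α‖ / a) (‖β‖ / ‖b‖) :=
  beltrami_bound_circumradius_general a ha b hb d r hr hcirc hab
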